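/- arXiv:1707.03922 — 3 statements merged into one kernel-verified Lean document; each statement's English description precedes it below -/
import Mathlib

section
/- The Boltzmann distribution is a stationary distribution of the Hastings-modified Monte Carlo Markov chain: for every state y, Σ_{x∈X} π_x · p^H_{x,y} = π_y (equivalently, π·P^H = π). -/
open Real Finset

lemma min_key (a b nx ny : ℝ) (ha : 0 < a) (hb : 0 < b) (hx : 0 < nx) (hy : 0 < ny) :
    a * ((1/nx) * min 1 (b/a * nx / ny)) = min (a/nx) (b/ny) := by
  have h : a * ((1/nx) * min 1 (b/a * nx / ny)) = min (a/nx * 1) (a/nx * (b/a * nx / ny)) := by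
    rw [← mul_min_of_nonneg _ _ (by positivity : (0:ℝ) ≤ a/nx)]
    ring
  rw [h]; congr 1
  · ring
  · field_simp

/-- The Boltzmann distribution is a stationary distribution of the
Hastings-modified Monte Carlo Markov chain: for every state `y`,
`∑ x, pi x * PH x y = pi y` (equivalently, `pi · PH = pi`). -/
theorem hastings_boltzmann_stationary
    {X : Type*} [Fintype X] [Nonempty X] [DecidableEq X]
    (Adj : X → X → Prop) [DecidableRel Adj]
    (hsymm : Symmetric Adj) (hirr : Irreflexive Adj)
    (hnbr : ∀ x, ∃ y, Adj x y)
    (N : X → ℕ) (hN : ∀ x, N x = (Finset.univ.filter (fun y => Adj x y)).card)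
    (E : X → ℝ) (RT : ℝ) (hRT : 0 < RT)
    (Z : ℝ) (hZ : Z = ∑ x, Real.exp (-E x / RT))
    (pi : X → ℝ) (hpi : ∀ x, pi x = Real.exp (-E x / RT) / Z)
    (PH : X → X → ℝ)
    (hPHadj : ∀ x y, Adj x y →
      PH x y = (1 / (N x : ℝ)) * min 1 (Real.exp (-(E y - E x) / RT) * (N x : ℝ) / (N y : ℝ)))
    (hPHdiag : ∀ x, PH x x = 1 - ∑ u ∈ Finset.univ.filter (fun u => Adj x u), PH x u)
    (hPHnon : ∀ x y, x ≠ y → ¬ Adj x y → PH x y = 0) :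
    ∀ y, ∑ x, pi x * PH x y = pi y := by
  have hZpos : 0 < Z := by
    rw [hZ]; exact Finset.sum_pos (fun x _ => Real.exp_pos _) Finset.univ_nonempty
  have hNpos : ∀ x, 0 < (N x : ℝ) := by
    intro x
    have : (Finset.univ.filter (fun y => Adj x y)).Nonempty := by
      obtain ⟨y, hy⟩ := hnbr x
      exact ⟨y, by simp [hy]⟩
    rw [hN x]
    exact_mod_cast Finset.card_pos.2 this
  -- detailed balance
  have db : ∀ x y, Adj x y → pi x * PH x y = pi y * PH y x := by
    intro x y hxy
    have hyx := hsymm hxy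
    rw [hpi, hpi, hPHadj x y hxy, hPHadj y x hyx]
    set a := Real.exp (-E x / RT) with ha
    set b := Real.exp (-E y / RT) with hb
    have ea : Real.exp (-(E y - E x) / RT) = b / a := by
      rw [ha, hb, ← Real.exp_sub]; ring_nf
    have eb : Real.exp (-(E x - E y) / RT) = a / b := by
      rw [ha, hb, ← Real.exp_sub]; ring_nf
    rw [ea, eb]
    have h1 : a / Z * (1 / (N x : ℝ) * min 1 (b / a * (N x : ℝ) / (N y : ℝ)))
        = (1/Z) * (a * (1 / (N x : ℝ) * min 1 (b / a * (N x : ℝ) / (N y : ℝ)))) := by ring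
    have h2 : b / Z * (1 / (N y : ℝ) * min 1 (a / b * (N y : ℝ) / (N x : ℝ)))
        = (1/Z) * (b * (1 / (N y : ℝ) * min 1 (a / b * (N y : ℝ) / (N x : ℝ)))) := by ring
    rw [h1, h2, min_key a b _ _ (Real.exp_pos _) (Real.exp_pos _) (hNpos x) (hNpos y),
      min_key b a _ _ (Real.exp_pos _) (Real.exp_pos _) (hNpos y) (hNpos x), min_comm]
  intro y
  have hysub : insert y (Finset.univ.filter (fun x => Adj y x)) ⊆ Finset.univ := by
    simp
  have hstep : ∑ x, pi x * PH x y
      = ∑ x ∈ insert y (Finset.univ.filter (fun x => Adj y x)), pi x * PH x y := by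
    refine (Finset.sum_subset hysub ?_).symm
    intro x _ hx
    simp only [Finset.mem_insert, Finset.mem_filter, Finset.mem_univ, true_and, not_or] at hx
    rw [hPHnon x y hx.1 (fun h => hx.2 (hsymm h)), mul_zero]
  rw [hstep, Finset.sum_insert (by simp [hirr y])]
  have : ∑ x ∈ Finset.univ.filter (fun x => Adj y x), pi x * PH x y
      = ∑ x ∈ Finset.univ.filter (fun x => Adj y x), pi y * PH y x := by
    refine Finset.sum_congr rfl ?_
    intro x hx
    simp only [Finset.mem_filter] at hx
    exact db x y (hsymm hx.2)
  rw [this, ← Finset.mul_sum, hPHdiag y]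
  ring
end

section
/- Ratio identity at the heart of Theorem 1: let s*_x = π_x·Φ₂(x) / Σ_{z∈X} π_z·Φ₂(z) be the stationary distribution of the jump chain built from the Boltzmann distribution π. Then the ratio of the s*-weighted expected Monte Carlo holding time to the s*-weighted expected Gillespie holding time equals the Boltzmann expected network degree: (Σ_{x∈X} s*_x / Φ₁(x)) / (Σ_{x∈X} s*_x / Φ₂(x)) = Σ_{x∈X} π_x · N_x. -/
open Real Finset

/-- Ratio identity at the heart of Theorem 1: let
`ss x = pi x * Φ₂ x / ∑ z, pi z * Φ₂ z` be the stationary distribution of the jump chain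
built from the Boltzmann distribution `pi`.  Then the ratio of the `ss`-weighted expected
Monte Carlo holding time to the `ss`-weighted expected Gillespie holding time equals the
Boltzmann expected network degree:
`(∑ x, ss x / Φ₁ x) / (∑ x, ss x / Φ₂ x) = ∑ x, pi x * N x`. -/
theorem ratio_of_expected_holding_times_eq_expected_degree
    {X : Type*} [Fintype X] [Nonempty X] [DecidableEq X]
    (Adj : X → X → Prop) [DecidableRel Adj]
    (hsymm : Symmetric Adj) (hirr : Irreflexive Adj)
    (hnbr : ∀ x, ∃ y, Adj x y)
    (N : X → ℕ) (hN : ∀ x, N x = (Finset.univ.filter (fun y => Adj x y)).card)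
    (E : X → ℝ) (RT : ℝ) (hRT : 0 < RT)
    (Z : ℝ) (hZ : Z = ∑ x, Real.exp (-E x / RT))
    (pi : X → ℝ) (hpi : ∀ x, pi x = Real.exp (-E x / RT) / Z)
    (Q : X → X → ℝ)
    (hQadj : ∀ x y, Adj x y → Q x y = min 1 (Real.exp (-(E y - E x) / RT)))
    (Φ₂ : X → ℝ)
    (hΦ₂ : ∀ x, Φ₂ x = ∑ y ∈ Finset.univ.filter (fun y => Adj x y), Q x y)
    (hΦ₂pos : ∀ x, 0 < Φ₂ x)
    (Φ₁ : X → ℝ)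
    (hΦ₁ : ∀ x, Φ₁ x = Φ₂ x / (N x : ℝ))
    (hΦ₁pos : ∀ x, 0 < Φ₁ x)
    (ss : X → ℝ)
    (hss : ∀ x, ss x = pi x * Φ₂ x / ∑ z, pi z * Φ₂ z) :
    (∑ x, ss x / Φ₁ x) / (∑ x, ss x / Φ₂ x) = ∑ x, pi x * (N x : ℝ) := by
  have hZpos : 0 < Z := by
    rw [hZ]
    exact Finset.sum_pos (fun x _ => Real.exp_pos _) Finset.univ_nonempty
  have hpipos : ∀ x, 0 < pi x := fun x => by
    rw [hpi]; exact div_pos (Real.exp_pos _) hZpos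
  set S := ∑ z, pi z * Φ₂ z with hS
  have hSpos : 0 < S :=
    Finset.sum_pos (fun x _ => mul_pos (hpipos x) (hΦ₂pos x)) Finset.univ_nonempty
  have hNpos : ∀ x, (0:ℝ) < (N x : ℝ) := by
    intro x
    have : 0 < (Finset.univ.filter (fun y => Adj x y)).card := by
      obtain ⟨y, hy⟩ := hnbr x
      exact Finset.card_pos.mpr ⟨y, by simp [hy]⟩
    rw [hN x]; exact_mod_cast this
  have h1 : ∀ x, ss x / Φ₁ x = pi x * (N x : ℝ) / S := by
    intro x
    rw [hss, hΦ₁]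
    field_simp [(hΦ₂pos x).ne', hSpos.ne']
  have h2 : ∀ x, ss x / Φ₂ x = pi x / S := by
    intro x
    rw [hss]
    rw [div_div, mul_comm S (Φ₂ x), ← div_div, mul_div_assoc,
      div_self (hΦ₂pos x).ne', mul_one]
  have hsum2 : ∑ x, ss x / Φ₂ x = (∑ x, pi x) / S := by
    simp only [h2]; rw [Finset.sum_div]
  have hpisum : ∑ x, pi x = 1 := by
    simp only [hpi, ← Finset.sum_div, ← hZ]
    exact div_self hZpos.ne'
  calc (∑ x, ss x / Φ₁ x) / (∑ x, ss x / Φ₂ x)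
      = (∑ x, pi x * (N x : ℝ) / S) / ((∑ x, pi x) / S) := by rw [hsum2]; simp only [h1]
    _ = ((∑ x, pi x * (N x : ℝ)) / S) / (1 / S) := by rw [← Finset.sum_div, hpisum]
    _ = ∑ x, pi x * (N x : ℝ) := by field_simp
end

section
/- Hitting-time scaling on a regular network: suppose the adjacency relation is N-regular, i.e., every state has exactly N ≥ 1 neighbors, and fix a target state x∞. If k : X → ℝ satisfies the Gillespie mean-hitting-time equations, namely k(x∞) = 0 and Φ₂(x)·k(x) = 1 + Σ_{y neighbor of x} q_{x,y}·k(y) for every state x ≠ x∞, then h := N·k satisfies the Monte Carlo mean-hitting-time equations: h(x∞) = 0 and h(x) = 1 + Σ_{y∈X} p_{x,y}·h(y) for every state x ≠ x∞. Hence on a regular network the Monte Carlo mean first passage time equals N times the Gillespie mean first passage time. -/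
open Real Finset

/-- Hitting-time scaling on a regular network: suppose the adjacency
relation is `N`-regular, i.e., every state has exactly `N ≥ 1` neighbors, and fix a target
state `xfin`.  If `k : X → ℝ` satisfies the Gillespie mean-hitting-time equations, namely
`k xfin = 0` and `Φ₂ x * k x = 1 + ∑_{y neighbor of x} Q x y * k y` for every state `x ≠ xfin`,
then `h := N • k` satisfies the Monte Carlo mean-hitting-time equations: `h xfin = 0` and
`h x = 1 + ∑ y, P x y * h y` for every state `x ≠ xfin`.  Hence on a regular network the
Monte Carlo mean first passage time equals `N` times the Gillespie mean first passage
time. -/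
theorem regular_network_hitting_time_scaling
    {X : Type*} [Fintype X] [Nonempty X] [DecidableEq X]
    (Adj : X → X → Prop) [DecidableRel Adj]
    (hsymm : Symmetric Adj) (hirr : Irreflexive Adj)
    (N : ℕ) (hNpos : 1 ≤ N)
    (hreg : ∀ x, (Finset.univ.filter (fun y => Adj x y)).card = N)
    (E : X → ℝ) (RT : ℝ) (hRT : 0 < RT)
    (Q : X → X → ℝ)
    (hQadj : ∀ x y, Adj x y → Q x y = min 1 (Real.exp (-(E y - E x) / RT)))
    (hQnon : ∀ x y, x ≠ y → ¬ Adj x y → Q x y = 0)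
    (Φ₂ : X → ℝ)
    (hΦ₂ : ∀ x, Φ₂ x = ∑ y ∈ Finset.univ.filter (fun y => Adj x y), Q x y)
    (P : X → X → ℝ)
    (hPadj : ∀ x y, Adj x y →
      P x y = (1 / (N : ℝ)) * min 1 (Real.exp (-(E y - E x) / RT)))
    (hPdiag : ∀ x, P x x = 1 - ∑ u ∈ Finset.univ.filter (fun u => Adj x u), P x u)
    (hPnon : ∀ x y, x ≠ y → ¬ Adj x y → P x y = 0)
    (xfin : X) (k : X → ℝ)
    (hk0 : k xfin = 0)
    (hk : ∀ x, x ≠ xfin →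
      Φ₂ x * k x = 1 + ∑ y ∈ Finset.univ.filter (fun y => Adj x y), Q x y * k y) :
    (fun x => (N : ℝ) * k x) xfin = 0 ∧
    ∀ x, x ≠ xfin →
      (N : ℝ) * k x = 1 + ∑ y, P x y * ((N : ℝ) * k y) := by
  have hN : (N : ℝ) ≠ 0 := by
    have : 0 < N := hNpos
    exact_mod_cast this.ne'
  constructor
  · simp [hk0]
  · intro x hx
    have hPQ : ∀ y ∈ Finset.univ.filter (fun y => Adj x y), P x y = Q x y / N := by
      intro y hy
      simp only [Finset.mem_filter] at hy
      rw [hPadj x y hy.2, hQadj x y hy.2]; ring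
    have hsub : Finset.univ.filter (fun y => Adj x y) ⊆ Finset.univ.erase x := by
      intro y hy
      simp only [Finset.mem_filter, Finset.mem_univ, true_and] at hy
      exact Finset.mem_erase.mpr ⟨fun h => hirr x (h ▸ hy), Finset.mem_univ y⟩
    have hsum : ∑ y, P x y * ((N:ℝ) * k y)
        = P x x * ((N:ℝ) * k x)
          + ∑ y ∈ Finset.univ.filter (fun y => Adj x y), Q x y * k y := by
      rw [← Finset.add_sum_erase _ _ (Finset.mem_univ x)]
      congr 1
      rw [← Finset.sum_subset hsub]
      · refine Finset.sum_congr rfl fun y hy => ?_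
        rw [hPQ y hy]
        field_simp
      · intro y hy hny
        simp only [Finset.mem_erase] at hy
        rw [hPnon x y (Ne.symm hy.1) (by simpa using hny)]
        ring
    have hPdx : P x x = 1 - Φ₂ x / N := by
      rw [hPdiag x, hΦ₂ x, Finset.sum_div]
      congr 1
      exact Finset.sum_congr rfl hPQ
    have e1 : (1 - Φ₂ x / ↑N) * (↑N * k x) = ↑N * k x - Φ₂ x * k x := by
      field_simp
    rw [hsum, hPdx, e1]
    linarith [hk x hx]
end
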